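/- Let 𝓕 = {[0), [1)}. For every positive integer k, both γ_k and δ_k are non-injective monoid endomorphisms of B_ω^𝓕. -/
import Mathlib


/-- `[a) = {x ∈ ω : x ≥ a}`. -/
def seg (a : ℕ) : Set ℕ := {x | a ≤ x}

/-- `n + F` taken within `ω`: `{x ∈ ω : x = n + k for some k ∈ F}`. -/
def shift (n : ℤ) (F : Set ℕ) : Set ℕ := {x | ∃ k ∈ F, (x : ℤ) = n + k}

/-- The carrier `B_ω × 𝒫(ω)`. -/
abbrev BF := ℕ × ℕ × Set ℕ

/-- The multiplication on `B_ω × 𝒫(ω)`. -/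
def bfMul (x y : BF) : BF :=
  if x.2.1 ≤ y.1 then
    (x.1 + (y.1 - x.2.1), y.2.1, shift ((x.2.1 : ℤ) - y.1) x.2.2 ∩ y.2.2)
  else
    (x.1, (x.2.1 - y.1) + y.2.1, x.2.2 ∩ shift ((y.1 : ℤ) - x.2.1) y.2.2)

/-- The family `𝓕 = {[0), [1)}`. -/
def Fam : Set (Set ℕ) := {seg 0, seg 1}

/-- The carrier of the monoid `B_ω^𝓕` for `𝓕 = {[0),[1)}`. -/
def Dom : Set BF := {x | x.2.2 ∈ Fam}

/-- The map `γ_k`. -/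
def gam (k : ℕ) : BF → BF := fun x => (k * x.1, k * x.2.1, seg 0)

open Classical

/-- The map `δ_k`. -/
noncomputable def del (k : ℕ) : BF → BF := fun x =>
  if x.2.2 = seg 1 then (k * (x.1 + 1), k * (x.2.1 + 1), seg 0)
  else (k * x.1, k * x.2.1, seg 0)

/-- `e` is a monoid endomorphism of `B_ω^𝓕` for `𝓕 = {[0),[1)}`. -/
def IsMonEnd (e : BF → BF) : Prop :=
  (∀ x ∈ Dom, e x ∈ Dom) ∧
  e (0, 0, seg 0) = (0, 0, seg 0) ∧
  ∀ x ∈ Dom, ∀ y ∈ Dom, e (bfMul x y) = bfMul (e x) (e y)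

lemma seg_injective : Function.Injective seg := by
  intro a b h
  have ha : a ∈ seg b := h ▸ (le_refl a : a ∈ seg a)
  have hb : b ∈ seg a := h.symm ▸ (le_refl b : b ∈ seg b)
  exact le_antisymm hb ha

lemma shift_seg (n : ℤ) (a : ℕ) : shift n (seg a) = seg (n + a).toNat := by
  ext x
  simp only [shift, seg, Set.mem_setOf_eq]
  constructor
  · rintro ⟨m, hm, h⟩; omega
  · intro h; exact ⟨(x - n).toNat, by omega, by omega⟩

lemma seg_inter (a b : ℕ) : seg a ∩ seg b = seg (max a b) := by
  ext x; simp only [seg, Set.mem_inter_iff, Set.mem_setOf_eq]; omega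

lemma mul_min' (k a b : ℕ) : min (k*a) (k*b) = k * min a b := by
  rcases Nat.le_total a b with h|h
  · rw [min_eq_left h, min_eq_left (Nat.mul_le_mul_left k h)]
  · rw [min_eq_right h, min_eq_right (Nat.mul_le_mul_left k h)]

lemma mul_sub' (k a b : ℕ) : k * (a - b) = k*a - k*b := by
  rcases Nat.le_total b a with h|h
  · have h' : k*b ≤ k*a := Nat.mul_le_mul_left k h
    zify [h, h']; ring
  · rw [Nat.sub_eq_zero_of_le h, Nat.sub_eq_zero_of_le (Nat.mul_le_mul_left k h), Nat.mul_zero]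

lemma mul_arith (k X Y1 Y2 Z1 Z2 : ℕ) (h : X = Y1 + Y2 - min Z1 Z2) :
    k * X = k*Y1 + k*Y2 - min (k*Z1) (k*Z2) := by
  subst h; rw [mul_sub', Nat.mul_add, mul_min']

lemma bfMul_seg (A B C D a b : ℕ) :
    bfMul (A, B, seg a) (C, D, seg b) =
      (A + C - min B C, B + D - min B C, seg (max (a - (C - B)) (b - (B - C)))) := by
  unfold bfMul
  dsimp only
  split_ifs with h <;> simp only [Prod.mk.injEq] <;>
    refine ⟨by omega, by omega, ?_⟩ <;>
    rw [shift_seg, seg_inter] <;> exact congrArg seg (by omega)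

lemma del_eval (k P Q m : ℕ) :
    del k (P, Q, seg m) =
      if m = 1 then (k*(P+1), k*(Q+1), seg 0) else (k*P, k*Q, seg 0) := by
  simp only [del, seg_injective.eq_iff]

lemma mem_dom (A B : ℕ) (F : Set ℕ) : (A, B, F) ∈ Dom ↔ F = seg 0 ∨ F = seg 1 := by
  simp [Dom, Fam, Set.mem_insert_iff, Set.mem_singleton_iff]

/-- For every positive integer `k`, both `γ_k` and `δ_k` are non-injective monoid
endomorphisms of `B_ω^𝓕`. -/
theorem stmt12 (k : ℕ) (hk : 0 < k) :
    (IsMonEnd (gam k) ∧ ¬ Set.InjOn (gam k) Dom) ∧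
    (IsMonEnd (del k) ∧ ¬ Set.InjOn (del k) Dom) := by
  have hne : seg 0 ≠ seg 1 := fun h => by simpa using seg_injective h
  constructor
  · constructor
    · refine ⟨?_, ?_, ?_⟩
      · intro x _; exact Or.inl rfl
      · simp [gam]
      · intro x hx y hy
        obtain ⟨A, B, F⟩ := x; obtain ⟨C, D, G⟩ := y
        rw [mem_dom] at hx hy
        rcases hx with rfl|rfl <;> rcases hy with rfl|rfl <;>
          rw [bfMul_seg] <;>
          simp only [gam] <;>
          rw [bfMul_seg] <;>
          simp only [Prod.mk.injEq] <;>
          exact ⟨mul_arith k _ _ _ _ _ (by omega),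
            mul_arith k _ _ _ _ _ (by omega), congrArg seg (by omega)⟩
    · intro h
      have h1 : (0, 0, seg 0) ∈ Dom := Or.inl rfl
      have h2 : ((0 : ℕ), (0 : ℕ), seg 1) ∈ Dom := Or.inr rfl
      have := h h1 h2 rfl
      simp only [Prod.mk.injEq, true_and] at this
      exact hne this
  · constructor
    · refine ⟨?_, ?_, ?_⟩
      · intro x _
        by_cases hx : x.2.2 = seg 1 <;> simp [del, hx] <;> exact Or.inl rfl
      · show del k (0, 0, seg 0) = _
        rw [show ((0:ℕ), (0:ℕ), seg 0) = ((0:ℕ), (0:ℕ), seg (0:ℕ)) from rfl, del_eval]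
        simp
      · intro x hx y hy
        obtain ⟨A, B, F⟩ := x; obtain ⟨C, D, G⟩ := y
        rw [mem_dom] at hx hy
        rcases hx with rfl|rfl <;> rcases hy with rfl|rfl <;>
          rw [bfMul_seg, del_eval, del_eval, del_eval] <;>
          simp only [Nat.zero_ne_one, reduceIte] <;>
          split_ifs with hm <;>
          (try exact absurd hm (by omega)) <;>
          rw [bfMul_seg] <;>
          simp only [Prod.mk.injEq] <;>
          exact ⟨mul_arith k _ _ _ _ _ (by omega),
            mul_arith k _ _ _ _ _ (by omega), congrArg seg (by omega)⟩
    · intro h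
      have h1 : ((1:ℕ), (1:ℕ), seg 0) ∈ Dom := Or.inl rfl
      have h2 : ((0:ℕ), (0:ℕ), seg 1) ∈ Dom := Or.inr rfl
      have heq : del k (1, 1, seg 0) = del k (0, 0, seg 1) := by
        simp [del, hne]
      have := h h1 h2 heq
      simpa using congrArg (fun p => p.1) this
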